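/- arXiv:math/0107084 — 3 statements merged into one kernel-verified Lean document; each statement's English description precedes it below -/
import Mathlib

section
/- Let $a, d$ be distinct positive reals with $ad = n$. Then $\int_1^{NP_1} \frac{dy}{y^2} \int_{-\infty}^\infty k\left(\frac{(NP-1)^2}{NP}\cdot\frac{x^2+y^2}{y^2}\right) dx = \frac{\ln NP_1}{(NP)^{1/2} - (NP)^{-1/2}}\, g(\ln NP)$, where $k(t) = (1 + t/4)^{-s}$ for real $s > 1$, $NP > 1$, $NP_1 > 1$, and $g(u) = \int_{w}^\infty k(t)\frac{dt}{\sqrt{t - w}}$ with $w = e^u + e^{-u} - 2$. -/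
open MeasureTheory

/-- The test function `k(t) = (1 + t/4)^{-s}`. -/
noncomputable def kfun (s t : ℝ) : ℝ := (1 + t / 4) ^ (-s)

/-- `g(u) = ∫_w^∞ k(t) (t-w)^{-1/2} dt` with `w = e^u + e^{-u} - 2`. -/
noncomputable def gfun (s u : ℝ) : ℝ :=
  ∫ t in Set.Ioi (Real.exp u + Real.exp (-u) - 2),
    kfun s t / Real.sqrt (t - (Real.exp u + Real.exp (-u) - 2))

/-!
With `c = (NP - 1)² / NP`, the substitution `x ↦ x y` turns the inner integral into
`y · I` with `I = ∫ k(c (x² + 1)) dx`, so the left side is `I · ln NP₁`. On the other side,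
`e^{ln NP} + e^{-ln NP} - 2 = c`, and the substitutions `t = c + x²`, then `x ↦ √c x`, give
`g(ln NP) = √c · I`, where `√c = √NP - 1/√NP`.
-/

open Real Set

theorem integral_comp_add_right_Ioi (f : ℝ → ℝ) (a b : ℝ) :
    ∫ x in Ioi a, f (x + b) = ∫ x in Ioi (a + b), f x := by
  have hemb : MeasurableEmbedding (fun x : ℝ => x + b) :=
    (Homeomorph.addRight b).measurableEmbedding
  have h := hemb.setIntegral_map (μ := volume) f (Ioi (a + b))
  rw [map_add_right_eq_self, preimage_add_const_Ioi, add_sub_cancel_right] at h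
  exact h.symm

theorem integral_Ioi_div_sqrt_sub (f : ℝ → ℝ) (w : ℝ) :
    ∫ t in Ioi w, f t / √(t - w) = 2 * ∫ x in Ioi 0, f (x ^ 2 + w) := by
  rw [← zero_add w, ← integral_comp_add_right_Ioi, zero_add]
  simp only [add_sub_cancel_right]
  rw [← integral_comp_rpow_Ioi_of_pos (g := fun t => f (t + w) / √t) two_pos,
    ← integral_const_mul]
  refine setIntegral_congr_fun measurableSet_Ioi fun x (hx : 0 < x) => ?_
  rw [rpow_two, smul_eq_mul, sqrt_sq hx.le, show (2 : ℝ) - 1 = 1 by norm_num, rpow_one]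
  field_simp

theorem integral_Ioi_div_sqrt_sub_eq_sqrt_mul {c : ℝ} (hc : 0 < c) (f : ℝ → ℝ) :
    ∫ t in Ioi c, f t / √(t - c) = √c * ∫ x, f (c * (x ^ 2 + 1)) := by
  have hsqrt : 0 < √c := sqrt_pos.mpr hc
  have hscale : ∫ x in Ioi 0, f (x ^ 2 + c) = √c * ∫ x in Ioi 0, f (c * (x ^ 2 + 1)) := by
    have h := integral_comp_mul_right_Ioi (fun x => f (x ^ 2 + c)) 0 hsqrt
    rw [zero_mul, smul_eq_mul] at h
    have hsub : ∫ x in Ioi 0, f ((x * √c) ^ 2 + c) = ∫ x in Ioi 0, f (c * (x ^ 2 + 1)) := by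
      refine setIntegral_congr_fun measurableSet_Ioi fun x _ => ?_
      rw [mul_pow, sq_sqrt hc.le]
      ring_nf
    rw [← hsub, h, ← mul_assoc, mul_inv_cancel₀ hsqrt.ne', one_mul]
  have heven : ∫ x, f (c * (x ^ 2 + 1)) = ∫ x, f (c * (|x| ^ 2 + 1)) := by
    simp only [sq_abs]
  rw [integral_Ioi_div_sqrt_sub, hscale, heven,
    integral_comp_abs (f := fun x => f (c * (x ^ 2 + 1)))]
  ring

theorem sq_sub_one_div_eq {a : ℝ} (ha : 0 < a) :
    (a - 1) ^ 2 / a = (√a - 1 / √a) ^ 2 := by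
  have hs : 0 < √a := sqrt_pos.mpr ha
  field_simp
  rw [sq_sqrt ha.le]
  ring

theorem sqrt_sq_sub_one_div {a : ℝ} (ha : 1 ≤ a) :
    √((a - 1) ^ 2 / a) = √a - 1 / √a := by
  have hs : 1 ≤ √a := one_le_sqrt.mpr ha
  rw [sq_sub_one_div_eq (by linarith), sqrt_sq]
  rw [sub_nonneg, div_le_iff₀ (by linarith)]
  nlinarith

theorem exp_log_add_exp_neg_log_sub_two {a : ℝ} (ha : 0 < a) :
    exp (log a) + exp (-log a) - 2 = (a - 1) ^ 2 / a := by
  rw [exp_neg, exp_log ha]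
  field_simp
  ring

theorem gfun_log (s : ℝ) {a : ℝ} (ha : 1 < a) :
    gfun s (log a) = (√a - 1 / √a) * ∫ x, kfun s ((a - 1) ^ 2 / a * (x ^ 2 + 1)) := by
  have ha0 : 0 < a := by linarith
  have hc : 0 < (a - 1) ^ 2 / a := div_pos (by nlinarith) ha0
  rw [gfun, exp_log_add_exp_neg_log_sub_two ha0, integral_Ioi_div_sqrt_sub_eq_sqrt_mul hc,
    sqrt_sq_sub_one_div ha.le]

theorem integral_comp_mul_sq_add_sq_div_sq (f : ℝ → ℝ) (c : ℝ) {y : ℝ} (hy : 0 < y) :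
    ∫ x, f (c * ((x ^ 2 + y ^ 2) / y ^ 2)) = y * ∫ x, f (c * (x ^ 2 + 1)) := by
  have h := Measure.integral_comp_div (fun x => f (c * (x ^ 2 + 1))) y
  rw [abs_of_pos hy, smul_eq_mul] at h
  rw [← h]
  congr with x
  field_simp

theorem stmt_10_general (s NP NP₁ : ℝ) (hNP : 1 < NP) (hNP₁ : 1 < NP₁) :
    (∫ y in (1 : ℝ)..NP₁,
      (∫ x : ℝ, kfun s ((NP - 1) ^ 2 / NP * ((x ^ 2 + y ^ 2) / y ^ 2))) / y ^ 2) =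
    Real.log NP₁ / (Real.sqrt NP - 1 / Real.sqrt NP) * gfun s (Real.log NP) := by
  have hsqrt : √NP - 1 / √NP ≠ 0 := by
    rw [← sqrt_sq_sub_one_div hNP.le]
    exact (sqrt_pos.mpr (div_pos (by nlinarith) (by linarith))).ne'
  rw [gfun_log s hNP]
  generalize hI : ∫ x, kfun s ((NP - 1) ^ 2 / NP * (x ^ 2 + 1)) = I
  have hinner : ∀ y ∈ uIcc 1 NP₁,
      (∫ x, kfun s ((NP - 1) ^ 2 / NP * ((x ^ 2 + y ^ 2) / y ^ 2))) / y ^ 2 = I * y⁻¹ := by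
    intro y hy
    have hy0 : 0 < y := by
      rw [uIcc_of_le hNP₁.le] at hy
      linarith [hy.1]
    rw [integral_comp_mul_sq_add_sq_div_sq _ _ hy0, hI]
    field_simp
  rw [intervalIntegral.integral_congr hinner, intervalIntegral.integral_const_mul,
    integral_inv_of_pos one_pos (by linarith), div_one, ← mul_assoc, div_mul_cancel₀ _ hsqrt,
    mul_comm]

/-- The hyperbolic-term evaluation in the Selberg trace formula:
`∫_1^{NP₁} y^{-2} ∫_ℝ k((NP-1)²/NP · (x²+y²)/y²) dx dy
   = ln NP₁ / (√NP - 1/√NP) · g(ln NP)`. -/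
theorem stmt_10 (s NP NP₁ : ℝ) (hs : 1 < s) (hNP : 1 < NP) (hNP₁ : 1 < NP₁) :
    (∫ y in (1 : ℝ)..NP₁,
      (∫ x : ℝ, kfun s ((NP - 1) ^ 2 / NP * ((x ^ 2 + y ^ 2) / y ^ 2))) / y ^ 2) =
    Real.log NP₁ / (Real.sqrt NP - 1 / Real.sqrt NP) * gfun s (Real.log NP) :=
  stmt_10_general s NP NP₁ hNP hNP₁
end

section
/- For $0 < \theta < \pi$ and real $s > 1$, with $k(t) = (1+t/4)^{-s}$: $\int_0^\infty \int_{-\infty}^\infty k\left(\frac{|z^2+1|^2}{y^2}\sin^2\theta\right) \frac{dx\,dy}{y^2} = \frac{\pi}{2\sin\theta}\int_0^\infty \frac{k(t)}{\sqrt{t + 4\sin^2\theta}}\,dt$, where $z = x + iy$ and the left integral is over the upper half-plane with hyperbolic measure. -/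
open MeasureTheory

/-!
With `u = (x² + y² + 1) / (2y) = cosh d(z, i)` one has `|z² + 1|² / y² = 4 (u² - 1)`, so the
integrand depends on `u` only. For fixed `y`, substituting `x ↦ u` gives
`∫ g(u) dx / y² = ∫_{u > 1} 2 g(u) / (y √(2uy - y² - 1)) du`; after exchanging the order of
integration, the `y`-integral of `1 / (y √(2uy - y² - 1))` is `π` for every `u > 1`. Thus the
hyperbolic measure pushes forward to `2π du` on `(1, ∞)`, and the substitution
`t = 4 sin²θ (u² - 1)` turns the right-hand side into the same integral. Fubini applies because
`k(t) ≤ (1 + t/4)⁻¹` for `s ≥ 1`.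
-/

open Set Real

section ReciprocalSineSubstitution

variable {u : ℝ}

lemma sub_sqrt_mul_add_sqrt (hu : 1 ≤ u) : (u - √(u ^ 2 - 1)) * (u + √(u ^ 2 - 1)) = 1 := by
  have := Real.sq_sqrt (show 0 ≤ u ^ 2 - 1 by nlinarith)
  linear_combination -this

lemma sqrt_sq_sub_one_lt (hu : 1 ≤ u) : √(u ^ 2 - 1) < u :=
  (Real.sqrt_lt' (by linarith)).2 (by linarith)

lemma add_sqrt_mul_sin_pos (hu : 1 ≤ u) (φ : ℝ) : 0 < u + √(u ^ 2 - 1) * sin φ := by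
  nlinarith [sqrt_sq_sub_one_lt hu, Real.sqrt_nonneg (u ^ 2 - 1), neg_one_le_sin φ, sin_le_one φ]

lemma image_inv_add_sqrt_mul_sin (hu : 1 < u) :
    (fun φ => (u + √(u ^ 2 - 1) * sin φ)⁻¹) '' Ioo (-(π / 2)) (π / 2) =
      Ioo (u - √(u ^ 2 - 1)) (u + √(u ^ 2 - 1)) := by
  set r := √(u ^ 2 - 1)
  have hr : 0 < r := Real.sqrt_pos.2 (by nlinarith)
  have hur : 0 < u - r := sub_pos.2 (sqrt_sq_sub_one_lt hu.le)
  have hprod : (u - r) * (u + r) = 1 := sub_sqrt_mul_add_sqrt hu.le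
  have hinv_sub : (u - r)⁻¹ = u + r := inv_eq_of_mul_eq_one_right hprod
  have hinv_add : (u + r)⁻¹ = u - r := inv_eq_of_mul_eq_one_left hprod
  ext y
  constructor
  · rintro ⟨φ, hφ, rfl⟩
    have hcos := cos_pos_of_mem_Ioo hφ
    have hsin : sin φ ∈ Ioo (-1) 1 := by
      constructor <;> nlinarith [sin_sq_add_cos_sq φ]
    constructor
    · rw [← hinv_add]
      exact inv_strictAnti₀ (add_sqrt_mul_sin_pos hu.le φ) (by nlinarith [hsin.2])
    · rw [← hinv_sub]
      exact inv_strictAnti₀ hur (by nlinarith [hsin.1])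
  · rintro ⟨hy₁, hy₂⟩
    have hy : 0 < y := hur.trans hy₁
    have hw₁ : u - r < y⁻¹ := by rw [← hinv_add]; exact inv_strictAnti₀ hy hy₂
    have hw₂ : y⁻¹ < u + r := by rw [← hinv_sub]; exact inv_strictAnti₀ hur hy₁
    have hlt : (y⁻¹ - u) / r < 1 := by rw [div_lt_one hr]; linarith
    have hgt : -1 < (y⁻¹ - u) / r := by rw [lt_div_iff₀ hr]; linarith
    refine ⟨arcsin ((y⁻¹ - u) / r), ⟨neg_pi_div_two_lt_arcsin.2 hgt, arcsin_lt_pi_div_two.2 hlt⟩, ?_⟩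
    dsimp only
    rw [sin_arcsin hgt.le hlt.le, mul_div_cancel₀ _ hr.ne', add_sub_cancel, inv_inv]

lemma abs_deriv_smul_inv_mul_sqrt (hu : 1 < u) {φ : ℝ} (hφ : φ ∈ Ioo (-(π / 2)) (π / 2)) :
    |-(√(u ^ 2 - 1) * cos φ) / (u + √(u ^ 2 - 1) * sin φ) ^ 2| •
      ((u + √(u ^ 2 - 1) * sin φ)⁻¹ *
        √(2 * u * (u + √(u ^ 2 - 1) * sin φ)⁻¹ - ((u + √(u ^ 2 - 1) * sin φ)⁻¹) ^ 2 - 1))⁻¹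
      = 1 := by
  set r := √(u ^ 2 - 1)
  set w := u + r * sin φ
  have hr : 0 < r := Real.sqrt_pos.2 (by nlinarith)
  have hr2 : r ^ 2 = u ^ 2 - 1 := Real.sq_sqrt (by nlinarith)
  have hw : 0 < w := add_sqrt_mul_sin_pos hu.le φ
  have hcos : 0 < cos φ := cos_pos_of_mem_Ioo hφ
  have hsq : 2 * u * w⁻¹ - (w⁻¹) ^ 2 - 1 = (r * cos φ * w⁻¹) ^ 2 := by
    field_simp
    linear_combination (-1) * hr2 - r ^ 2 * sin_sq_add_cos_sq φ
  rw [hsq, Real.sqrt_sq (by positivity), smul_eq_mul, abs_div, abs_neg,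
    abs_of_pos (by positivity), abs_of_pos (by positivity)]
  field_simp

lemma hasDerivAt_inv_add_sqrt_mul_sin (hu : 1 ≤ u) (φ : ℝ) :
    HasDerivAt (fun φ => (u + √(u ^ 2 - 1) * sin φ)⁻¹)
      (-(√(u ^ 2 - 1) * cos φ) / (u + √(u ^ 2 - 1) * sin φ) ^ 2) φ :=
  (((hasDerivAt_sin φ).const_mul _).const_add u).inv (add_sqrt_mul_sin_pos hu φ).ne'

lemma injOn_inv_add_sqrt_mul_sin (hu : 1 < u) :
    InjOn (fun φ => (u + √(u ^ 2 - 1) * sin φ)⁻¹) (Ioo (-(π / 2)) (π / 2)) := by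
  refine StrictAntiOn.injOn fun a ha b hb hab => inv_strictAnti₀ (add_sqrt_mul_sin_pos hu.le a) ?_
  have hr : 0 < √(u ^ 2 - 1) := Real.sqrt_pos.2 (by nlinarith)
  gcongr
  exact strictMonoOn_sin (Ioo_subset_Icc_self ha) (Ioo_subset_Icc_self hb) hab

/-- Outside this interval `2uy - y² - 1 ≤ 0`, so the square root, and with it the inverse,
takes the junk value `0`. -/
lemma inv_mul_sqrt_eq_zero (hu : 1 ≤ u) {y : ℝ} (hy : y ∉ Ioo (u - √(u ^ 2 - 1)) (u + √(u ^ 2 - 1))) :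
    (y * √(2 * u * y - y ^ 2 - 1))⁻¹ = 0 := by
  have hr2 : √(u ^ 2 - 1) ^ 2 = u ^ 2 - 1 := Real.sq_sqrt (by nlinarith)
  have : 2 * u * y - y ^ 2 - 1 ≤ 0 := by
    rw [mem_Ioo, not_and_or, not_lt, not_lt] at hy
    rcases hy with hy | hy <;> nlinarith [Real.sqrt_nonneg (u ^ 2 - 1)]
  rw [Real.sqrt_eq_zero'.2 this, mul_zero, inv_zero]

lemma integrableOn_inv_mul_sqrt (hu : 1 < u) :
    IntegrableOn (fun y => (y * √(2 * u * y - y ^ 2 - 1))⁻¹) (Ioi 0) := by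
  refine IntegrableOn.of_forall_sdiff_eq_zero ?_ measurableSet_Ioi
    fun y hy => inv_mul_sqrt_eq_zero hu.le hy.2
  rw [← image_inv_add_sqrt_mul_sin hu, integrableOn_image_iff_integrableOn_abs_deriv_smul
      measurableSet_Ioo (fun φ _ => (hasDerivAt_inv_add_sqrt_mul_sin hu.le φ).hasDerivWithinAt)
      (injOn_inv_add_sqrt_mul_sin hu),
    integrableOn_congr_fun (fun φ hφ => abs_deriv_smul_inv_mul_sqrt hu hφ) measurableSet_Ioo]
  exact integrableOn_const (by simp)

/-- The substitution `y = 1 / (u + √(u² - 1) sin φ)` turns the integrand into `1`. -/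
lemma integral_inv_mul_sqrt (hu : 1 < u) :
    ∫ y in Ioi 0, (y * √(2 * u * y - y ^ 2 - 1))⁻¹ = π := by
  have hsub : Ioo (u - √(u ^ 2 - 1)) (u + √(u ^ 2 - 1)) ⊆ Ioi 0 := fun y hy =>
    (sub_pos.2 (sqrt_sq_sub_one_lt hu.le)).trans hy.1
  rw [setIntegral_eq_of_subset_of_forall_sdiff_eq_zero measurableSet_Ioi hsub
      fun y hy => inv_mul_sqrt_eq_zero hu.le hy.2,
    ← image_inv_add_sqrt_mul_sin hu, integral_image_eq_integral_abs_deriv_smul measurableSet_Ioo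
      (fun φ _ => (hasDerivAt_inv_add_sqrt_mul_sin hu.le φ).hasDerivWithinAt)
      (injOn_inv_add_sqrt_mul_sin hu),
    setIntegral_congr_fun measurableSet_Ioo fun φ hφ => abs_deriv_smul_inv_mul_sqrt hu hφ]
  simp [pi_pos.le]

end ReciprocalSineSubstitution

section CoshDistSubstitution

variable {y : ℝ}

lemma image_cosh_dist_Ioi (hy : 0 < y) :
    (fun x => (x ^ 2 + y ^ 2 + 1) / (2 * y)) '' Ioi 0 = Ioi ((y ^ 2 + 1) / (2 * y)) := by
  ext u
  constructor
  · rintro ⟨x, hx, rfl⟩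
    rw [mem_Ioi]
    apply div_lt_div_of_pos_right _ (by positivity)
    nlinarith [mem_Ioi.1 hx]
  · intro hu
    have h : 0 < 2 * u * y - y ^ 2 - 1 := by
      have := (div_lt_iff₀ (by positivity)).1 (mem_Ioi.1 hu)
      linarith
    refine ⟨√(2 * u * y - y ^ 2 - 1), Real.sqrt_pos.2 h, ?_⟩
    simp only
    rw [Real.sq_sqrt h.le]
    field_simp
    ring

/-- The integrand on the right vanishes for `u ≤ (y² + 1) / (2y)`, where the square root takes
the junk value `0`. -/
lemma integral_comp_cosh_dist (g : ℝ → ℝ) (hy : 0 < y) :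
    ∫ x, g ((x ^ 2 + y ^ 2 + 1) / (2 * y)) =
      2 * y * ∫ u in Ioi 1, g u / √(2 * u * y - y ^ 2 - 1) := by
  set v : ℝ → ℝ := fun x => (x ^ 2 + y ^ 2 + 1) / (2 * y)
  have hderiv : ∀ x ∈ Ioi (0 : ℝ), HasDerivWithinAt v (x / y) (Ioi 0) x := by
    intro x _
    refine (((hasDerivAt_pow 2 x).add_const (y ^ 2)).add_const 1 |>.div_const (2 * y)
      |>.congr_deriv ?_).hasDerivWithinAt
    field_simp
    norm_num
  have hinj : InjOn v (Ioi 0) := StrictMonoOn.injOn fun a ha b hb hab => by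
    apply div_lt_div_of_pos_right _ (by positivity)
    nlinarith [mem_Ioi.1 ha]
  have hsubst : ∀ x ∈ Ioi (0 : ℝ), |x / y| • (y * g (v x) / √(2 * v x * y - y ^ 2 - 1)) =
      g (v x) := by
    intro x hx
    have hx : 0 < x := hx
    have : 2 * v x * y - y ^ 2 - 1 = x ^ 2 := by simp only [v]; field_simp; ring
    rw [this, Real.sqrt_sq hx.le, abs_of_pos (by positivity), smul_eq_mul]
    field_simp
  have hvanish : ∀ u ∈ Ioi 1 \ Ioi ((y ^ 2 + 1) / (2 * y)),
      y * g u / √(2 * u * y - y ^ 2 - 1) = 0 := by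
    rintro u ⟨-, hu⟩
    have : 2 * u * y - y ^ 2 - 1 ≤ 0 := by
      have hu : u ≤ (y ^ 2 + 1) / (2 * y) := not_lt.1 hu
      have := (le_div_iff₀ (by positivity)).1 hu
      linarith
    rw [Real.sqrt_eq_zero'.2 this, div_zero]
  have hsub : Ioi ((y ^ 2 + 1) / (2 * y)) ⊆ Ioi 1 := by
    refine Ioi_subset_Ioi ((le_div_iff₀ (by positivity)).2 ?_)
    nlinarith [sq_nonneg (y - 1)]
  calc ∫ x, g (v x) = 2 * ∫ x in Ioi 0, g (v x) := by
        simpa only [v, sq_abs] using integral_comp_abs (f := fun x => g (v x))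
    _ = 2 * ∫ u in Ioi 1, y * g u / √(2 * u * y - y ^ 2 - 1) := by
        rw [setIntegral_eq_of_subset_of_forall_sdiff_eq_zero measurableSet_Ioi hsub hvanish,
          ← image_cosh_dist_Ioi hy,
          integral_image_eq_integral_abs_deriv_smul measurableSet_Ioi hderiv hinj,
          setIntegral_congr_fun measurableSet_Ioi hsubst]
    _ = 2 * y * ∫ u in Ioi 1, g u / √(2 * u * y - y ^ 2 - 1) := by
        simp_rw [mul_div_assoc, integral_const_mul, mul_assoc]

end CoshDistSubstitution

theorem integral_upperHalfPlane_comp_cosh_dist {g : ℝ → ℝ} (hg : IntegrableOn g (Ioi 1)) :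
    ∫ y in Ioi 0, (∫ x, g ((x ^ 2 + y ^ 2 + 1) / (2 * y))) / y ^ 2 =
      2 * π * ∫ u in Ioi 1, g u := by
  set K : ℝ → ℝ → ℝ := fun y u => (y * √(2 * u * y - y ^ 2 - 1))⁻¹
  have hK_nonneg : ∀ y ∈ Ioi (0 : ℝ), ∀ u, 0 ≤ K y u := fun y hy u =>
    inv_nonneg.2 (mul_nonneg (le_of_lt hy) (Real.sqrt_nonneg _))
  have hinner : ∀ y ∈ Ioi (0 : ℝ), (∫ x, g ((x ^ 2 + y ^ 2 + 1) / (2 * y))) / y ^ 2 =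
      2 * ∫ u in Ioi 1, K y u * g u := by
    intro y hy
    have hy : 0 < y := hy
    have : ∀ u, g u / √(2 * u * y - y ^ 2 - 1) = y * (K y u * g u) := fun u => by
      simp only [K]; field_simp
    simp_rw [integral_comp_cosh_dist g hy, this, integral_const_mul]
    field_simp
  have hmeas : AEStronglyMeasurable (Function.uncurry fun y u => K y u * g u)
      ((volume.restrict (Ioi 0)).prod (volume.restrict (Ioi 1))) :=
    (Measurable.aestronglyMeasurable (by fun_prop)).mul hg.aestronglyMeasurable.comp_snd
  have hint : Integrable (Function.uncurry fun y u => K y u * g u)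
      ((volume.restrict (Ioi 0)).prod (volume.restrict (Ioi 1))) := by
    refine (integrable_prod_iff' hmeas).2 ⟨?_, ?_⟩
    · filter_upwards [ae_restrict_mem measurableSet_Ioi] with u hu
      exact (integrableOn_inv_mul_sqrt hu).mul_const (g u)
    · refine ((hg.norm.const_mul π).congr ?_)
      filter_upwards [ae_restrict_mem measurableSet_Ioi] with u hu
      calc π * ‖g u‖ = ∫ y in Ioi 0, K y u * ‖g u‖ := by
            rw [integral_mul_const, integral_inv_mul_sqrt hu]
        _ = _ := setIntegral_congr_fun measurableSet_Ioi fun y hy => by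
            simp [norm_mul, abs_of_nonneg (hK_nonneg y hy u)]
  calc ∫ y in Ioi 0, (∫ x, g ((x ^ 2 + y ^ 2 + 1) / (2 * y))) / y ^ 2
      = ∫ y in Ioi 0, 2 * ∫ u in Ioi 1, K y u * g u := setIntegral_congr_fun measurableSet_Ioi hinner
    _ = 2 * ∫ u in Ioi 1, ∫ y in Ioi 0, K y u * g u := by
      rw [integral_const_mul, integral_integral_swap hint]
    _ = 2 * ∫ u in Ioi 1, π * g u := by
      congr 1
      refine setIntegral_congr_fun measurableSet_Ioi fun u hu => ?_
      rw [integral_mul_const, integral_inv_mul_sqrt hu]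
    _ = 2 * π * ∫ u in Ioi 1, g u := by rw [integral_const_mul, mul_assoc]

lemma image_mul_sq_sub_one_Ioi {c : ℝ} (hc : 0 < c) :
    (fun u => 4 * c ^ 2 * (u ^ 2 - 1)) '' Ioi 1 = Ioi 0 := by
  ext t
  constructor
  · rintro ⟨u, hu, rfl⟩
    have : (0 : ℝ) < u ^ 2 - 1 := by nlinarith [mem_Ioi.1 hu]
    exact mem_Ioi.2 (by positivity)
  · intro ht
    have ht : 0 < t := ht
    have h : 0 < t / (4 * c ^ 2) := by positivity
    refine ⟨√(1 + t / (4 * c ^ 2)), (Real.lt_sqrt zero_le_one).2 (by linarith), ?_⟩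
    simp only
    rw [Real.sq_sqrt (by linarith)]
    field_simp
    ring

lemma integral_div_sqrt_add_mul_sq (f : ℝ → ℝ) {c : ℝ} (hc : 0 < c) :
    ∫ t in Ioi 0, f t / √(t + 4 * c ^ 2) = 4 * c * ∫ u in Ioi 1, f (4 * c ^ 2 * (u ^ 2 - 1)) := by
  have hderiv : ∀ u ∈ Ioi (1 : ℝ), HasDerivWithinAt (fun u => 4 * c ^ 2 * (u ^ 2 - 1))
      (8 * c ^ 2 * u) (Ioi 1) u := fun u _ =>
    ((hasDerivAt_pow 2 u).sub_const 1 |>.const_mul (4 * c ^ 2) |>.congr_deriv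
      (by norm_num; ring)).hasDerivWithinAt
  have hinj : InjOn (fun u => 4 * c ^ 2 * (u ^ 2 - 1)) (Ioi 1) :=
    StrictMonoOn.injOn fun a ha b hb hab => by
      have : a ^ 2 < b ^ 2 := by nlinarith [mem_Ioi.1 ha]
      gcongr
  have hsubst : ∀ u ∈ Ioi (1 : ℝ), |8 * c ^ 2 * u| •
      (f (4 * c ^ 2 * (u ^ 2 - 1)) / √(4 * c ^ 2 * (u ^ 2 - 1) + 4 * c ^ 2)) =
      4 * c * f (4 * c ^ 2 * (u ^ 2 - 1)) := by
    intro u hu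
    have hu : 0 < u := zero_lt_one.trans hu
    rw [show 4 * c ^ 2 * (u ^ 2 - 1) + 4 * c ^ 2 = (2 * c * u) ^ 2 by ring,
      Real.sqrt_sq (by positivity), abs_of_pos (by positivity), smul_eq_mul]
    field_simp
    ring
  rw [← image_mul_sq_sub_one_Ioi hc,
    integral_image_eq_integral_abs_deriv_smul measurableSet_Ioi hderiv hinj,
    setIntegral_congr_fun measurableSet_Ioi hsubst, integral_const_mul]

lemma kfun_le_inv {s t : ℝ} (hs : 1 ≤ s) (ht : 0 ≤ t) : kfun s t ≤ (1 + t / 4)⁻¹ := by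
  rw [← Real.rpow_neg_one]
  exact Real.rpow_le_rpow_of_exponent_le (by linarith) (by linarith)

lemma integrableOn_kfun_mul_sq_sub_one {s c : ℝ} (hs : 1 ≤ s) (hc : 0 < c) :
    IntegrableOn (fun u => kfun s (4 * c ^ 2 * (u ^ 2 - 1))) (Ioi 1) := by
  have hdom : Integrable fun u : ℝ => (1 + (c * (u - 1)) ^ 2)⁻¹ := by
    simpa using (integrable_inv_one_add_sq.comp_mul_left' hc.ne').comp_sub_right 1
  refine hdom.integrableOn.mono' (Measurable.aestronglyMeasurable (by unfold kfun; fun_prop)) ?_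
  filter_upwards [ae_restrict_mem measurableSet_Ioi] with u hu
  have hu : 1 < u := hu
  have ht : 0 ≤ 4 * c ^ 2 * (u ^ 2 - 1) := by
    have : 0 ≤ u ^ 2 - 1 := by nlinarith
    positivity
  have hk : 0 ≤ kfun s (4 * c ^ 2 * (u ^ 2 - 1)) := Real.rpow_nonneg (by linarith) _
  rw [Real.norm_of_nonneg hk]
  refine (kfun_le_inv hs ht).trans (inv_anti₀ (by positivity) ?_)
  nlinarith [sq_nonneg c]

/-- The elliptic-term evaluation in the Selberg trace formula: for `0 < θ < π`,
`∫_{ℋ} k(|z²+1|²/y² · sin²θ) dμ(z) = π/(2 sin θ) ∫_0^∞ k(t)/√(t + 4 sin²θ) dt`. -/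
theorem stmt_11 (s θ : ℝ) (hs : 1 < s) (hθ0 : 0 < θ) (hθπ : θ < Real.pi) :
    (∫ y in Set.Ioi (0 : ℝ),
      (∫ x : ℝ,
        kfun s (((x ^ 2 - y ^ 2 + 1) ^ 2 + 4 * x ^ 2 * y ^ 2) / y ^ 2 *
          Real.sin θ ^ 2)) / y ^ 2) =
    Real.pi / (2 * Real.sin θ) *
      ∫ t in Set.Ioi (0 : ℝ), kfun s t / Real.sqrt (t + 4 * Real.sin θ ^ 2) := by
  have hsin : 0 < sin θ := sin_pos_of_pos_of_lt_pi hθ0 hθπ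
  have hcosh : ∀ y ∈ Ioi (0 : ℝ),
      (∫ x, kfun s (((x ^ 2 - y ^ 2 + 1) ^ 2 + 4 * x ^ 2 * y ^ 2) / y ^ 2 * sin θ ^ 2)) / y ^ 2 =
        (∫ x, kfun s (4 * sin θ ^ 2 * (((x ^ 2 + y ^ 2 + 1) / (2 * y)) ^ 2 - 1))) / y ^ 2 := by
    intro y hy
    have hy : y ≠ 0 := (mem_Ioi.1 hy).ne'
    congr 2 with x
    congr 1
    field_simp
    ring
  rw [setIntegral_congr_fun measurableSet_Ioi hcosh,
    integral_upperHalfPlane_comp_cosh_dist (integrableOn_kfun_mul_sq_sub_one hs.le hsin),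
    integral_div_sqrt_add_mul_sq _ hsin]
  field_simp
  norm_num
end

section
/- Let $N$ be a positive integer, $w$ a positive divisor of $N$, $u$ coprime to $w$, and suppose $A, D$ are rational numbers and $B$ a rational number such that the matrix $M = \sigma_{\frak a}\begin{pmatrix} A & B \\ 0 & D\end{pmatrix}\sigma_{\frak a}^{-1} = \begin{pmatrix} A - B L \frac uw & B L \frac{u^2}{w^2} \\ \frac wu(A - D) - BL & D + BL\frac uw\end{pmatrix}$ (where $L = \mathrm{lcm}(w^2,N)$, $\frak a = u/w$) has all entries integers with the lower-left entry divisible by $N$. Then $A$ and $D$ are integers and $\gcd(w, N/w)$ divides $A - D$. -/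
/-! Put `t = B L u / w`. Then `t u = w M₀₁` and `t w = u M₁₀ - w (M₀₀ - M₁₁)` are integers, so
`t ∈ ℤ` because `u` and `w` are coprime, and `w ∣ t`. Hence `A = M₀₀ + t` and `D = M₁₁ - t` are
integers, and `w (A - D) = u M₁₀ + w t` with `N ∣ M₁₀` gives `A - D ∈ u (N / w) ℤ + w ℤ`. -/

theorem exists_intCast_eq_of_isCoprime {R : Type*} [CommRing R] {u w : ℤ} (h : IsCoprime u w)
    {t : R} (htu : ∃ m : ℤ, (m : R) = t * u) (htw : ∃ n : ℤ, (n : R) = t * w) :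
    ∃ k : ℤ, (k : R) = t := by
  obtain ⟨x, y, hxy⟩ := h
  obtain ⟨m, hm⟩ := htu
  obtain ⟨n, hn⟩ := htw
  refine ⟨x * m + y * n, ?_⟩
  have hxyR : (x : R) * u + y * w = 1 := by simpa using congrArg (Int.cast : ℤ → R) hxy
  push_cast
  linear_combination x * hm + y * hn + t * hxyR

theorem gcd_dvd_of_mul_eq_add {N w u c k x : ℤ} (hw : w ≠ 0) (hwN : w ∣ N) (hNc : N ∣ c)
    (hwk : w ∣ k) (hx : w * x = u * c + w * k) : (Int.gcd w (N / w) : ℤ) ∣ x := by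
  obtain ⟨m, rfl⟩ := hwN
  obtain ⟨c', rfl⟩ := hNc
  rw [Int.mul_ediv_cancel_left _ hw]
  have hx' : x = u * m * c' + k := mul_left_cancel₀ hw (by rw [hx]; ring)
  rw [hx']
  exact dvd_add (((Int.gcd_dvd_right w m).mul_left u).mul_right c')
    ((Int.gcd_dvd_left w m).trans hwk)

theorem stmt_15_general (N w u : ℤ) (hw : 0 < w) (hu : 0 < u)
    (hwN : w ∣ N) (hcop : IsCoprime u w) (A B D : ℚ)
    (L : ℤ)
    (h00 : ∃ z : ℤ, (z : ℚ) = A - B * L * (u / w))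
    (h01 : ∃ z : ℤ, (z : ℚ) = B * L * u ^ 2 / w ^ 2)
    (h10 : ∃ z : ℤ, (z : ℚ) = (w / u) * (A - D) - B * L ∧ (N : ℤ) ∣ z)
    (h11 : ∃ z : ℤ, (z : ℚ) = D + B * L * (u / w)) :
    ∃ A' D' : ℤ, (A' : ℚ) = A ∧ (D' : ℚ) = D ∧
      (Int.gcd w (N / w) : ℤ) ∣ (A' - D') := by
  obtain ⟨a, ha⟩ := h00
  obtain ⟨b, hb⟩ := h01
  obtain ⟨c, hc, hNc⟩ := h10
  obtain ⟨d, hd⟩ := h11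
  have hu0 : (u : ℚ) ≠ 0 := by exact_mod_cast hu.ne'
  have hw0 : (w : ℚ) ≠ 0 := by exact_mod_cast hw.ne'
  set t : ℚ := B * L * (u / w) with ht
  have htu : ((w * b : ℤ) : ℚ) = t * u := by
    push_cast
    rw [hb, ht]
    field_simp
  have htw : ((u * c - w * (a - d) : ℤ) : ℚ) = t * w := by
    push_cast
    rw [hc, ha, hd, ht]
    field_simp
    ring
  obtain ⟨k, hk⟩ := exists_intCast_eq_of_isCoprime hcop ⟨_, htu⟩ ⟨_, htw⟩
  have hwk : w ∣ k := hcop.symm.dvd_of_dvd_mul_right ⟨b, by exact_mod_cast (hk ▸ htu).symm⟩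
  refine ⟨a + k, d - k, by push_cast; linarith, by push_cast; linarith, ?_⟩
  refine gcd_dvd_of_mul_eq_add (u := u) hw.ne' hwN hNc hwk ?_
  have hwAD : ((w * (a + k - (d - k)) : ℤ) : ℚ) = ((u * c + w * k : ℤ) : ℚ) := by
    push_cast at htw ⊢
    linear_combination (w : ℚ) * hk - htw
  exact_mod_cast hwAD

/-- If `σ_𝔞 [[A,B],[0,D]] σ_𝔞⁻¹` has integer entries with lower-left entry
divisible by `N` (where `𝔞 = u/w`, `L = lcm(w²,N)`), then `A` and `D` are
integers and `gcd(w, N/w) ∣ A - D`. -/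
theorem stmt_15 (N w u : ℤ) (hN : 0 < N) (hw : 0 < w) (hu : 0 < u)
    (hwN : w ∣ N) (hcop : IsCoprime u w) (A B D : ℚ)
    (L : ℤ) (hL : L = lcm (w ^ 2) N)
    (h00 : ∃ z : ℤ, (z : ℚ) = A - B * L * (u / w))
    (h01 : ∃ z : ℤ, (z : ℚ) = B * L * u ^ 2 / w ^ 2)
    (h10 : ∃ z : ℤ, (z : ℚ) = (w / u) * (A - D) - B * L ∧ (N : ℤ) ∣ z)
    (h11 : ∃ z : ℤ, (z : ℚ) = D + B * L * (u / w)) :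
    ∃ A' D' : ℤ, (A' : ℚ) = A ∧ (D' : ℚ) = D ∧
      (Int.gcd w (N / w) : ℤ) ∣ (A' - D') :=
  stmt_15_general N w u hw hu hwN hcop A B D L h00 h01 h10 h11
end
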